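/- arXiv:2605.04185 — 3 statements merged into one kernel-verified Lean document; each statement's English description precedes it below -/
import Mathlib

section
/- (Heterogeneous rate constraint satisfaction.) For every index i, every previous action a_prevⁱ ∈ [a_minⁱ, a_maxⁱ], and every latent input uⁱ ∈ ℝ, the DD-SRad output aⁱ = a_prevⁱ + R_eff^i(uⁱ)·f(uⁱ) satisfies |aⁱ − a_prevⁱ| ≤ δⁱ and aⁱ ∈ [a_minⁱ, a_maxⁱ]. Moreover, if a_prevⁱ lies in the open interval (a_minⁱ, a_maxⁱ), then both inequalities are strict: |aⁱ − a_prevⁱ| < δⁱ and aⁱ ∈ (a_minⁱ, a_maxⁱ). -/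
/-- The squashing function `f(t) = t / √(1 + t²)`. -/
noncomputable def squash (t : ℝ) : ℝ := t / Real.sqrt (1 + t ^ 2)

/-- The per-dimension effective radius of DD-SRad. -/
noncomputable def Reff (δ amin amax aprev u : ℝ) : ℝ :=
  if 0 < u then min δ (amax - aprev)
  else if u < 0 then min δ (aprev - amin)
  else δ

lemma sqrt_pos' (t : ℝ) : 0 < Real.sqrt (1 + t ^ 2) :=
  Real.sqrt_pos.2 (by positivity)

lemma squash_pos {t : ℝ} (h : 0 < t) : 0 < squash t :=
  div_pos h (sqrt_pos' t)

lemma squash_lt_one {t : ℝ} (h : 0 < t) : squash t < 1 := by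
  rw [squash, div_lt_one (sqrt_pos' t)]
  calc t = Real.sqrt (t ^ 2) := by rw [Real.sqrt_sq h.le]
  _ < Real.sqrt (1 + t ^ 2) := by
      apply Real.sqrt_lt_sqrt (by positivity); linarith

lemma squash_neg' (t : ℝ) : squash (-t) = -squash t := by
  simp [squash, neg_div]

lemma squash_zero : squash 0 = 0 := by simp [squash]

/-- Heterogeneous rate constraint satisfaction: for every dimension (with rate limit
`δ > 0`, bounds `amin ≤ amax`, previous action `aprev ∈ [amin, amax]`) and every latent
input `u`, the DD-SRad output `a = aprev + Reff(u) · f(u)` satisfies `|a − aprev| ≤ δ`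
and `a ∈ [amin, amax]`; if moreover `aprev ∈ (amin, amax)`, both inequalities are strict. -/
theorem ddsrad_constraint_satisfaction (δ amin amax aprev u : ℝ)
    (hδ : 0 < δ) (hbound : amin ≤ amax) (hprev₁ : amin ≤ aprev) (hprev₂ : aprev ≤ amax) :
    (|aprev + Reff δ amin amax aprev u * squash u - aprev| ≤ δ ∧
      aprev + Reff δ amin amax aprev u * squash u ∈ Set.Icc amin amax) ∧
    (aprev ∈ Set.Ioo amin amax →
      |aprev + Reff δ amin amax aprev u * squash u - aprev| < δ ∧
      aprev + Reff δ amin amax aprev u * squash u ∈ Set.Ioo amin amax) := by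
  rcases lt_trichotomy u 0 with hu | hu | hu
  · -- u < 0
    have hs : 0 < squash (-u) := squash_pos (by linarith)
    have hs1 : squash (-u) < 1 := squash_lt_one (by linarith)
    have hsq : squash u = -squash (-u) := by rw [← squash_neg', neg_neg]
    have hR : Reff δ amin amax aprev u = min δ (aprev - amin) := by
      simp [Reff, hu, not_lt.2 hu.le]
    set R := min δ (aprev - amin) with hRdef
    have hR0 : 0 ≤ R := le_min hδ.le (by linarith)
    have hRδ : R ≤ δ := min_le_left _ _
    have hRa : R ≤ aprev - amin := min_le_right _ _
    rw [hR, hsq]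
    have hmul : R * -squash (-u) ≤ 0 := by nlinarith
    have hmul2 : R * squash (-u) ≤ R := by nlinarith
    constructor
    · constructor
      · rw [abs_le]; constructor <;> nlinarith
      · constructor <;> [nlinarith; nlinarith]
    · rintro ⟨h1, h2⟩
      have hRpos : 0 < R := lt_min hδ (by linarith)
      have hmul3 : R * squash (-u) < R := by nlinarith
      refine ⟨?_, ?_, ?_⟩
      · rw [abs_lt]; constructor <;> nlinarith
      · nlinarith
      · nlinarith
  · -- u = 0
    subst hu
    have : Reff δ amin amax aprev 0 * squash 0 = 0 := by simp [squash_zero]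
    rw [this]
    simp only [add_zero, sub_self, abs_zero]
    exact ⟨⟨hδ.le, hprev₁, hprev₂⟩, fun ⟨h1, h2⟩ => ⟨hδ, h1, h2⟩⟩
  · -- u > 0
    have hs : 0 < squash u := squash_pos hu
    have hs1 : squash u < 1 := squash_lt_one hu
    have hR : Reff δ amin amax aprev u = min δ (amax - aprev) := by simp [Reff, hu]
    set R := min δ (amax - aprev) with hRdef
    have hR0 : 0 ≤ R := le_min hδ.le (by linarith)
    have hRδ : R ≤ δ := min_le_left _ _
    have hRa : R ≤ amax - aprev := min_le_right _ _
    rw [hR]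
    have hmul : 0 ≤ R * squash u := by positivity
    have hmul2 : R * squash u ≤ R := by nlinarith
    constructor
    · exact ⟨by rw [abs_le]; constructor <;> nlinarith,
        by constructor <;> nlinarith⟩
    · rintro ⟨h1, h2⟩
      have hRpos : 0 < R := lt_min hδ (by linarith)
      have hmul3 : R * squash u < R := by nlinarith
      refine ⟨by rw [abs_lt]; constructor <;> nlinarith, by nlinarith, by nlinarith⟩
end

section
/- (Lipschitz continuity of the DD-SRad mapping.) The DD-SRad mapping φ : ℝ^d → ℝ^d satisfies ‖φ(u) − φ(û)‖₂ ≤ ‖δ‖₂ · ‖u − û‖₂ for all u, û ∈ ℝ^d, where ‖δ‖₂ = √(Σ_i (δⁱ)²) and ‖·‖₂ is the Euclidean norm on ℝ^d. -/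
/-- The DD-SRad mapping `φ : ℝᵈ → ℝᵈ` on Euclidean space. -/
noncomputable def ddsrad {d : ℕ} (δ amin amax aprev : Fin d → ℝ)
    (u : EuclideanSpace ℝ (Fin d)) : EuclideanSpace ℝ (Fin d) :=
  WithLp.toLp 2 (fun i => aprev i + Reff (δ i) (amin i) (amax i) (aprev i) (u i) * squash (u i))

/-!
In each coordinate, `t ↦ Reff t * squash t` equals `r₊ * squash t` on `[0, ∞)` and
`r₋ * squash t` on `(-∞, 0]` with `0 ≤ r± ≤ δ` (the value `Reff 0 = δ` is invisible because
`squash 0 = 0`). Since `squash = sin ∘ arctan` is `1`-Lipschitz, both pieces are `δ`-Lipschitz,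
and a map that is `K`-Lipschitz on both half-lines is `K`-Lipschitz on `ℝ`, by the triangle
inequality through `0`. Finally `∑ δᵢ² |uᵢ - vᵢ|² ≤ (∑ δⱼ²) ‖u - v‖²`.
-/

open Real NNReal Set

theorem Real.lipschitzWith_arctan : LipschitzWith 1 arctan := by
  refine lipschitzWith_of_nnnorm_deriv_le differentiable_arctan fun x => ?_
  rw [Real.deriv_arctan, ← NNReal.coe_le_coe, coe_nnnorm, Real.norm_eq_abs,
    abs_of_pos (by positivity), NNReal.coe_one, div_le_one (by positivity)]
  nlinarith [sq_nonneg x]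

theorem lipschitzWith_squash : LipschitzWith 1 squash := by
  have h : squash = sin ∘ arctan := funext fun t => (sin_arctan t).symm
  simpa [h] using lipschitzWith_sin.comp lipschitzWith_arctan

theorem lipschitzWith_mul_squash {r δ : ℝ} (hr : 0 ≤ r) (hrδ : r ≤ δ) :
    LipschitzWith δ.toNNReal (fun t => r * squash t) := by
  refine LipschitzWith.of_dist_le_mul fun x y => ?_
  rw [Real.dist_eq, Real.dist_eq, ← mul_sub, abs_mul, abs_of_nonneg hr,
    Real.coe_toNNReal _ (hr.trans hrδ)]
  simpa only [Real.dist_eq, NNReal.coe_one, one_mul] using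
    mul_le_mul hrδ (lipschitzWith_squash.dist_le_mul x y) dist_nonneg (hr.trans hrδ)

theorem LipschitzOnWith.congr {α β : Type*} [PseudoEMetricSpace α] [PseudoEMetricSpace β]
    {K : ℝ≥0} {s : Set α} {f g : α → β} (hf : LipschitzOnWith K f s) (h : EqOn f g s) :
    LipschitzOnWith K g s := fun x hx y hy => by
  simpa only [h hx, h hy] using hf hx hy

theorem LipschitzWith.of_lipschitzOnWith_Iic_Ici {E : Type*} [PseudoMetricSpace E]
    {f : ℝ → E} {K : ℝ≥0} (a : ℝ) (hle : LipschitzOnWith K f (Iic a))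
    (hge : LipschitzOnWith K f (Ici a)) : LipschitzWith K f := by
  have glue : ∀ x y, x ≤ a → a ≤ y → dist (f x) (f y) ≤ K * dist x y := fun x y hx hy =>
    calc dist (f x) (f y) ≤ dist (f x) (f a) + dist (f a) (f y) := dist_triangle _ _ _
      _ ≤ K * dist x a + K * dist a y :=
        add_le_add (hle.dist_le_mul x hx a (mem_Iic.2 le_rfl))
          (hge.dist_le_mul a (mem_Ici.2 le_rfl) y hy)
      _ = K * dist x y := by
        rw [Real.dist_eq, Real.dist_eq, Real.dist_eq, abs_of_nonpos (by linarith),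
          abs_of_nonpos (by linarith), abs_of_nonpos (by linarith)]
        ring
  refine LipschitzWith.of_dist_le_mul fun x y => ?_
  rcases le_total x a with hx | hx <;> rcases le_total y a with hy | hy
  · exact hle.dist_le_mul x hx y hy
  · exact glue x y hx hy
  · rw [dist_comm, dist_comm x]; exact glue y x hy hx
  · exact hge.dist_le_mul x hx y hy

section Reff

variable {δ amin amax aprev t : ℝ}

theorem Reff_mul_squash_of_nonneg (ht : 0 ≤ t) :
    Reff δ amin amax aprev t * squash t = min δ (amax - aprev) * squash t := by
  rcases ht.eq_or_lt with rfl | ht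
  · simp [squash]
  · simp [Reff, ht]

theorem Reff_mul_squash_of_nonpos (ht : t ≤ 0) :
    Reff δ amin amax aprev t * squash t = min δ (aprev - amin) * squash t := by
  rcases ht.eq_or_lt with rfl | ht
  · simp [squash]
  · simp [Reff, ht, ht.not_gt]

theorem lipschitzWith_Reff_mul_squash (hδ : 0 ≤ δ) (hmin : amin ≤ aprev)
    (hmax : aprev ≤ amax) :
    LipschitzWith δ.toNNReal (fun t => Reff δ amin amax aprev t * squash t) :=
  .of_lipschitzOnWith_Iic_Ici 0
    ((lipschitzWith_mul_squash (le_min hδ (by linarith)) (min_le_left _ _)).lipschitzOnWith.congr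
      fun _ ht => (Reff_mul_squash_of_nonpos ht).symm)
    ((lipschitzWith_mul_squash (le_min hδ (by linarith)) (min_le_left _ _)).lipschitzOnWith.congr
      fun _ ht => (Reff_mul_squash_of_nonneg ht).symm)

end Reff

theorem EuclideanSpace.norm_le_sqrt_sum_sq_mul {ι : Type*} [Fintype ι]
    {x y : EuclideanSpace ℝ ι} {K : ι → ℝ} (h : ∀ i, |x i| ≤ K i * |y i|) :
    ‖x‖ ≤ √(∑ i, K i ^ 2) * ‖y‖ := by
  simp only [EuclideanSpace.norm_eq, Real.norm_eq_abs]
  rw [← Real.sqrt_mul (by positivity), Finset.mul_sum]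
  refine Real.sqrt_le_sqrt (Finset.sum_le_sum fun i _ => ?_)
  calc |x i| ^ 2 ≤ K i ^ 2 * |y i| ^ 2 := by
        rw [← mul_pow]; exact pow_le_pow_left₀ (abs_nonneg _) (h i) 2
    _ ≤ (∑ j, K j ^ 2) * |y i| ^ 2 := by
        gcongr
        exact Finset.single_le_sum (fun j _ => sq_nonneg (K j)) (Finset.mem_univ i)

theorem ddsrad_lipschitz_general (d : ℕ) (δ amin amax aprev : Fin d → ℝ)
    (hδ : ∀ i, 0 < δ i)
    (hprev : ∀ i, aprev i ∈ Set.Icc (amin i) (amax i))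
    (u v : EuclideanSpace ℝ (Fin d)) :
    ‖ddsrad δ amin amax aprev u - ddsrad δ amin amax aprev v‖
      ≤ Real.sqrt (∑ i, δ i ^ 2) * ‖u - v‖ := by
  refine EuclideanSpace.norm_le_sqrt_sum_sq_mul fun i => ?_
  have hφ := lipschitzWith_Reff_mul_squash (hδ i).le (hprev i).1 (hprev i).2
  simpa [ddsrad, Real.dist_eq, (hδ i).le] using hφ.dist_le_mul (u i) (v i)

/-- Lipschitz continuity of the DD-SRad mapping:
`‖φ(u) − φ(û)‖₂ ≤ ‖δ‖₂ · ‖u − û‖₂` for all `u, û ∈ ℝᵈ`, where `‖δ‖₂ = √(Σᵢ (δⁱ)²)`. -/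
theorem ddsrad_lipschitz (d : ℕ) (δ amin amax aprev : Fin d → ℝ)
    (hδ : ∀ i, 0 < δ i) (hbound : ∀ i, amin i ≤ amax i)
    (hprev : ∀ i, aprev i ∈ Set.Icc (amin i) (amax i))
    (u v : EuclideanSpace ℝ (Fin d)) :
    ‖ddsrad δ amin amax aprev u - ddsrad δ amin amax aprev v‖
      ≤ Real.sqrt (∑ i, δ i ^ 2) * ‖u - v‖ :=
  ddsrad_lipschitz_general d δ amin amax aprev hδ hprev u v
end

section
/- (Tight coverage of the feasible set.) Suppose a_minⁱ < a_prevⁱ < a_maxⁱ for every i, and write R⁺ⁱ = min(δⁱ, a_maxⁱ − a_prevⁱ) and R⁻ⁱ = min(δⁱ, a_prevⁱ − a_minⁱ). Then the closure in ℝ^d of the image of the DD-SRad mapping φ equals the product box Π_i [a_prevⁱ − R⁻ⁱ, a_prevⁱ + R⁺ⁱ], and this box equals the feasible set F = {a ∈ ℝ^d : |aⁱ − a_prevⁱ| ≤ δⁱ for all i} ∩ Π_i [a_minⁱ, a_maxⁱ]. -/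
/-!
Each coordinate of `ddsrad` is `c + R(u) · squash u`, where `R(u)` is `R⁺` for `u > 0` and `R⁻`
for `u < 0`. Since `squash` maps `ℝ` onto `(-1, 1)` preserving signs (with inverse
`s ↦ s / √(1 - s²)`), the range of a coordinate is exactly the open interval `(c - R⁻, c + R⁺)`,
which is nondegenerate because `aprev` is interior. Hence the range of `ddsrad` is an open box,
and its closure is the closed box, as closure commutes with products.
-/

open Set

lemma sqrt_one_add_sq_pos (t : ℝ) : 0 < √(1 + t ^ 2) :=
  Real.sqrt_pos.2 (by positivity)

lemma squash_pos_iff {t : ℝ} : 0 < squash t ↔ 0 < t :=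
  div_pos_iff_of_pos_right (sqrt_one_add_sq_pos t)

lemma squash_neg_iff {t : ℝ} : squash t < 0 ↔ t < 0 := by
  rw [squash, div_lt_iff₀ (sqrt_one_add_sq_pos t), zero_mul]

lemma squash_div_sqrt_one_sub_sq {s : ℝ} (hs : s ∈ Ioo (-1) 1) :
    squash (s / √(1 - s ^ 2)) = s := by
  have hpos : 0 < 1 - s ^ 2 := by nlinarith [hs.1, hs.2]
  have hden : 1 + (s / √(1 - s ^ 2)) ^ 2 = (1 / √(1 - s ^ 2)) ^ 2 := by
    field_simp
    rw [Real.sq_sqrt hpos.le]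
    ring
  rw [squash, hden, Real.sqrt_sq (by positivity)]
  field_simp

lemma range_squash : range squash = Ioo (-1) 1 := by
  refine Subset.antisymm ?_ fun s hs => ⟨_, squash_div_sqrt_one_sub_sq hs⟩
  rintro _ ⟨t, rfl⟩
  have hbound := abs_lt.1 (Real.sqrt_sq_eq_abs t ▸
    Real.sqrt_lt_sqrt (sq_nonneg t) (lt_one_add (t ^ 2)))
  rw [squash, mem_Ioo, lt_div_iff₀ (sqrt_one_add_sq_pos t), div_lt_one (sqrt_one_add_sq_pos t)]
  constructor <;> linarith

lemma range_ite_mul_squash {m p : ℝ} (hm : 0 < m) (hp : 0 < p) (r : ℝ) :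
    range (fun u => (if 0 < u then p else if u < 0 then m else r) * squash u) =
      Ioo (-m) p := by
  ext x
  constructor
  · rintro ⟨u, rfl⟩
    dsimp only
    obtain ⟨hlo, hhi⟩ := range_squash ▸ mem_range_self (f := squash) u
    rcases lt_trichotomy u 0 with hu | rfl | hu
    · rw [if_neg hu.not_gt, if_pos hu]
      exact ⟨by nlinarith, by nlinarith [squash_neg_iff.2 hu]⟩
    · simpa [squash] using ⟨hm, hp⟩
    · rw [if_pos hu]
      exact ⟨by nlinarith [squash_pos_iff.2 hu], by nlinarith⟩
  · rintro ⟨hlo, hhi⟩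
    rcases lt_trichotomy x 0 with hx | rfl | hx
    · obtain ⟨t, ht⟩ : x / m ∈ range squash := by
        rw [range_squash, mem_Ioo, lt_div_iff₀ hm, div_lt_one hm]
        constructor <;> linarith
      have htneg : t < 0 := squash_neg_iff.1 (ht ▸ div_neg_of_neg_of_pos hx hm)
      refine ⟨t, ?_⟩
      simp only [if_neg htneg.not_gt, if_pos htneg, ht]
      field_simp
    · exact ⟨0, by simp [squash]⟩
    · obtain ⟨t, ht⟩ : x / p ∈ range squash := by
        rw [range_squash, mem_Ioo, lt_div_iff₀ hp, div_lt_one hp]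
        constructor <;> linarith
      have htpos : 0 < t := squash_pos_iff.1 (ht ▸ div_pos hx hp)
      refine ⟨t, ?_⟩
      simp only [if_pos htpos, ht]
      field_simp

lemma range_add_Reff_mul_squash {δ amin amax aprev : ℝ} (hδ : 0 < δ)
    (haprev : aprev ∈ Ioo amin amax) :
    range (fun u => aprev + Reff δ amin amax aprev u * squash u) =
      Ioo (aprev - min δ (aprev - amin)) (aprev + min δ (amax - aprev)) := by
  have hm : 0 < min δ (aprev - amin) := lt_min hδ (sub_pos.2 haprev.1)
  have hp : 0 < min δ (amax - aprev) := lt_min hδ (sub_pos.2 haprev.2)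
  unfold Reff
  rw [range_comp' (aprev + ·), range_ite_mul_squash hm hp, image_const_add_Ioo, ← sub_eq_add_neg]

lemma range_ddsrad {d : ℕ} {δ amin amax aprev : Fin d → ℝ} (hδ : ∀ i, 0 < δ i)
    (hint : ∀ i, aprev i ∈ Ioo (amin i) (amax i)) :
    range (ddsrad δ amin amax aprev) = WithLp.ofLp ⁻¹' univ.pi fun i =>
      Ioo (aprev i - min (δ i) (aprev i - amin i)) (aprev i + min (δ i) (amax i - aprev i)) := by
  simp_rw [← range_add_Reff_mul_squash (hδ _) (hint _)]
  ext a
  constructor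
  · rintro ⟨u, rfl⟩ i -
    exact ⟨u i, rfl⟩
  · intro ha
    choose u hu using fun i => ha i (mem_univ i)
    exact ⟨WithLp.toLp 2 u, WithLp.ofLp_injective 2 (funext hu)⟩

lemma closure_range_ddsrad {d : ℕ} {δ amin amax aprev : Fin d → ℝ} (hδ : ∀ i, 0 < δ i)
    (hint : ∀ i, aprev i ∈ Ioo (amin i) (amax i)) :
    closure (range (ddsrad δ amin amax aprev)) = {a : EuclideanSpace ℝ (Fin d) | ∀ i,
      a i ∈ Icc (aprev i - min (δ i) (aprev i - amin i)) (aprev i + min (δ i) (amax i - aprev i))} := by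
  have hne (i : Fin d) :
      aprev i - min (δ i) (aprev i - amin i) ≠ aprev i + min (δ i) (amax i - aprev i) := by
    have := lt_min (hδ i) (sub_pos.2 (hint i).1)
    have := lt_min (hδ i) (sub_pos.2 (hint i).2)
    linarith
  rw [range_ddsrad hδ hint]
  change closure (PiLp.homeomorph 2 (fun _ : Fin d => ℝ) ⁻¹' _) = _
  rw [← Homeomorph.preimage_closure, closure_pi_set]
  ext a
  simp only [closure_Ioo (hne _), mem_preimage, mem_pi, mem_univ, true_imp_iff]
  rfl

lemma mem_Icc_sub_min_add_min_iff {α : Type*} [AddCommGroup α] [LinearOrder α]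
    [IsOrderedAddMonoid α] {x c δ lo hi : α} :
    x ∈ Icc (c - min δ (c - lo)) (c + min δ (hi - c)) ↔ |x - c| ≤ δ ∧ x ∈ Icc lo hi := by
  simp only [mem_Icc, abs_le]
  grind

/-- Tight coverage of the feasible set: with interior previous actions, the closure of
the image of the DD-SRad mapping equals the product box
`Πᵢ [aprevⁱ − R⁻ⁱ, aprevⁱ + R⁺ⁱ]`, which in turn equals the feasible set
`{a : |aⁱ − aprevⁱ| ≤ δⁱ, ∀i} ∩ Πᵢ [aminⁱ, amaxⁱ]`. -/
theorem ddsrad_tight_coverage (d : ℕ) (δ amin amax aprev : Fin d → ℝ)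
    (hδ : ∀ i, 0 < δ i)
    (hint : ∀ i, aprev i ∈ Set.Ioo (amin i) (amax i)) :
    closure (Set.range (ddsrad δ amin amax aprev)) =
      {a : EuclideanSpace ℝ (Fin d) | ∀ i,
        a i ∈ Set.Icc (aprev i - min (δ i) (aprev i - amin i))
                      (aprev i + min (δ i) (amax i - aprev i))} ∧
    {a : EuclideanSpace ℝ (Fin d) | ∀ i,
        a i ∈ Set.Icc (aprev i - min (δ i) (aprev i - amin i))
                      (aprev i + min (δ i) (amax i - aprev i))} =
      {a : EuclideanSpace ℝ (Fin d) | ∀ i, |a i - aprev i| ≤ δ i} ∩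
        {a : EuclideanSpace ℝ (Fin d) | ∀ i, a i ∈ Set.Icc (amin i) (amax i)} := by
  refine ⟨closure_range_ddsrad hδ hint, ?_⟩
  ext a
  simp only [mem_ofPred_eq, mem_inter_iff, mem_Icc_sub_min_add_min_iff, forall_and]
end
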